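/- Let x* ∈ Δ be a stationary point of min_{x∈Δ} f(x) with KKT multipliers (λ*, μ*) at which strict complementarity holds (μ*_i > 0 for every i with x*_i = 0), and let {x^k} ⊆ Δ be any sequence converging to x*. Then there exists k̄ such that for all k ≥ k̄ the active-set estimate satisfies A(x^k) = {i : x*_i = 0} and N(x^k) = {i : x*_i > 0}. -/

import Mathlib

open scoped BigOperators Topology

noncomputable section

/-- The unit simplex in `ℝⁿ`. -/
def unitSimplex (n : ℕ) : Set (EuclideanSpace ℝ (Fin n)) :=
  {x | (∑ i, x i) = 1 ∧ ∀ i, 0 ≤ x i}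

/-- The active-set estimate `A(x) = {i : xᵢ ≤ ε ∇f(x)ᵀ(eᵢ - x)}` (parameter `ε > 0`). -/
def activeEstimate {n : ℕ} (f : EuclideanSpace ℝ (Fin n) → ℝ) (eps : ℝ)
    (x : EuclideanSpace ℝ (Fin n)) : Set (Fin n) :=
  {i | x i ≤ eps * ∑ j, gradient f x j * (EuclideanSpace.single i (1 : ℝ) j - x j)}

/-- The nonactive-set estimate `N(x) = {i : xᵢ > ε ∇f(x)ᵀ(eᵢ - x)}`. -/
def nonactiveEstimate {n : ℕ} (f : EuclideanSpace ℝ (Fin n) → ℝ) (eps : ℝ)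
    (x : EuclideanSpace ℝ (Fin n)) : Set (Fin n) :=
  {i | eps * ∑ j, gradient f x j * (EuclideanSpace.single i (1 : ℝ) j - x j) < x i}

/-!
Both estimates compare `xᵢ` with the threshold `ε ∇f(x)ᵀ(eᵢ - x)`, which is continuous in `x`
and equals `ε μ*ᵢ` at the stationary point. Strict complementarity says that `x*ᵢ` and `ε μ*ᵢ`
are never equal: either `x*ᵢ = 0 < ε μ*ᵢ` or `ε μ*ᵢ = 0 < x*ᵢ`. A strict inequality between
the limits persists along the sequence, so eventually each comparison has the same outcome as
at `x*`.
-/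

open Filter

theorem ContDiff.continuous_gradient {𝕜 F : Type*} [RCLike 𝕜] [NormedAddCommGroup F]
    [InnerProductSpace 𝕜 F] [CompleteSpace F] {f : F → 𝕜} {n : WithTop ℕ∞}
    (hf : ContDiff 𝕜 n f) (hn : n ≠ 0) : Continuous (gradient f) :=
  (InnerProductSpace.toDual 𝕜 F).symm.continuous.comp (hf.continuous_fderiv hn)

theorem Filter.Tendsto.eventually_lt_iff_lt {α γ : Type*} [TopologicalSpace α] [LinearOrder α]
    [OrderClosedTopology α] {l : Filter γ} {f g : γ → α} {y z : α}
    (hf : Tendsto f l (𝓝 y)) (hg : Tendsto g l (𝓝 z)) (hyz : y ≠ z) :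
    ∀ᶠ k in l, (f k < g k ↔ y < z) := by
  rcases hyz.lt_or_gt with hlt | hgt
  · filter_upwards [hf.eventually_lt hg hlt] with k hk using iff_of_true hk hlt
  · filter_upwards [hg.eventually_lt hf hgt] with k hk using
      iff_of_false hk.not_gt hgt.not_gt

theorem EuclideanSpace.sum_mul_single_sub {n : ℕ} (g y : EuclideanSpace ℝ (Fin n)) (i : Fin n) :
    ∑ j, g j * (EuclideanSpace.single i (1 : ℝ) j - y j) = g i - ∑ j, g j * y j := by
  simp only [mul_sub, Finset.sum_sub_distrib, PiLp.single_apply, mul_ite, mul_one, mul_zero,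
    Finset.sum_ite_eq', Finset.mem_univ, if_true]

def activeThreshold {n : ℕ} (f : EuclideanSpace ℝ (Fin n) → ℝ) (eps : ℝ)
    (x : EuclideanSpace ℝ (Fin n)) (i : Fin n) : ℝ :=
  eps * ∑ j, gradient f x j * (EuclideanSpace.single i (1 : ℝ) j - x j)

section Threshold

variable {n : ℕ} {f : EuclideanSpace ℝ (Fin n) → ℝ} {eps : ℝ}

theorem activeEstimate_eq (x : EuclideanSpace ℝ (Fin n)) :
    activeEstimate f eps x = {i | x i ≤ activeThreshold f eps x i} := rfl

theorem nonactiveEstimate_eq (x : EuclideanSpace ℝ (Fin n)) :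
    nonactiveEstimate f eps x = {i | activeThreshold f eps x i < x i} := rfl

theorem continuous_activeThreshold (hf : ContDiff ℝ 1 f) (i : Fin n) :
    Continuous fun x => activeThreshold f eps x i := by
  have hgrad := hf.continuous_gradient one_ne_zero
  unfold activeThreshold
  fun_prop

theorem activeThreshold_of_isKKT {xstar : EuclideanSpace ℝ (Fin n)} {lam : ℝ} {mu : Fin n → ℝ}
    (hsum : ∑ i, xstar i = 1) (hgrad : ∀ i, gradient f xstar i - lam - mu i = 0)
    (hcomp : ∑ i, mu i * xstar i = 0) (i : Fin n) :
    activeThreshold f eps xstar i = eps * mu i := by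
  have hgrad' : ∀ j, gradient f xstar j = lam + mu j := fun j => by linarith [hgrad j]
  have hpair : ∑ j, gradient f xstar j * xstar j = lam := by
    simp only [hgrad', add_mul, Finset.sum_add_distrib, ← Finset.mul_sum, hsum, hcomp]
    ring
  rw [activeThreshold, EuclideanSpace.sum_mul_single_sub, hpair, hgrad']
  ring

end Threshold

theorem lt_mul_iff_of_strictComplementarity {a m eps : ℝ} (heps : 0 < eps) (ha : 0 ≤ a)
    (hcomp : m * a = 0) (hstrict : a = 0 → 0 < m) :
    a ≠ eps * m ∧ (eps * m < a ↔ 0 < a) := by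
  rcases ha.eq_or_lt with rfl | hpos
  · have := mul_pos heps (hstrict rfl)
    exact ⟨this.ne, iff_of_false this.not_gt (lt_irrefl 0)⟩
  · have hm : m = 0 := (mul_eq_zero.1 hcomp).resolve_right hpos.ne'
    subst hm
    rw [mul_zero]
    exact ⟨hpos.ne', Iff.rfl⟩

theorem active_set_identification_along_sequence_general (n : ℕ)
    (f : EuclideanSpace ℝ (Fin n) → ℝ) (hf : ContDiff ℝ 1 f)
    (eps : ℝ) (heps : 0 < eps)
    (xstar : EuclideanSpace ℝ (Fin n)) (hxstar : xstar ∈ unitSimplex n)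
    (lam : ℝ) (mu : Fin n → ℝ)
    (hkkt : (∀ i, gradient f xstar i - lam - mu i = 0) ∧
      (∑ i, mu i * xstar i) = 0 ∧ (∀ i, 0 ≤ mu i))
    (hstrict : ∀ i, xstar i = 0 → 0 < mu i)
    (x : ℕ → EuclideanSpace ℝ (Fin n))
    (hconv : Filter.Tendsto x Filter.atTop (𝓝 xstar)) :
    ∃ kbar : ℕ, ∀ k ≥ kbar,
      activeEstimate f eps (x k) = {i | xstar i = 0} ∧
      nonactiveEstimate f eps (x k) = {i | 0 < xstar i} := by
  obtain ⟨hgrad, hcomp, hmu⟩ := hkkt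
  have hcompl : ∀ i, mu i * xstar i = 0 := fun i =>
    (Finset.sum_eq_zero_iff_of_nonneg fun j _ => mul_nonneg (hmu j) (hxstar.2 j)).1 hcomp i
      (Finset.mem_univ i)
  have key : ∀ i, ∀ᶠ k in atTop, (x k i ≤ activeThreshold f eps (x k) i ↔ xstar i = 0) ∧
      (activeThreshold f eps (x k) i < x k i ↔ 0 < xstar i) := fun i => by
    obtain ⟨hne, hiff⟩ :=
      lt_mul_iff_of_strictComplementarity heps (hxstar.2 i) (hcompl i) (hstrict i)
    have hthr : Tendsto (fun k => activeThreshold f eps (x k) i) atTop (𝓝 (eps * mu i)) := by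
      rw [← activeThreshold_of_isKKT hxstar.1 hgrad hcomp i]
      exact ((continuous_activeThreshold hf i).tendsto xstar).comp hconv
    have hcoord : Tendsto (fun k => x k i) atTop (𝓝 (xstar i)) :=
      ((EuclideanSpace.proj i).continuous.tendsto xstar).comp hconv
    filter_upwards [hthr.eventually_lt_iff_lt hcoord hne.symm] with k hk
    rw [← not_lt, hk, hiff, not_lt, (hxstar.2 i).ge_iff_eq']
    exact ⟨Iff.rfl, Iff.rfl⟩
  obtain ⟨kbar, hkbar⟩ := eventually_atTop.1 (eventually_all.2 key)
  refine ⟨kbar, fun k hk => ⟨?_, ?_⟩⟩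
  · rw [activeEstimate_eq]
    exact Set.ext fun i => (hkbar k hk i).1
  · rw [nonactiveEstimate_eq]
    exact Set.ext fun i => (hkbar k hk i).2

/-- If strict complementarity holds at a stationary point `x*` and `xᵏ → x*` within the
simplex, then eventually `A(xᵏ) = {i : x*ᵢ = 0}` and `N(xᵏ) = {i : x*ᵢ > 0}`. -/
theorem active_set_identification_along_sequence (n : ℕ)
    (f : EuclideanSpace ℝ (Fin n) → ℝ) (hf : ContDiff ℝ 1 f)
    (eps : ℝ) (heps : 0 < eps)
    (xstar : EuclideanSpace ℝ (Fin n)) (hxstar : xstar ∈ unitSimplex n)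
    (lam : ℝ) (mu : Fin n → ℝ)
    (hkkt : (∀ i, gradient f xstar i - lam - mu i = 0) ∧
      (∑ i, mu i * xstar i) = 0 ∧ (∀ i, 0 ≤ mu i))
    (hstrict : ∀ i, xstar i = 0 → 0 < mu i)
    (x : ℕ → EuclideanSpace ℝ (Fin n)) (hxk : ∀ k, x k ∈ unitSimplex n)
    (hconv : Filter.Tendsto x Filter.atTop (𝓝 xstar)) :
    ∃ kbar : ℕ, ∀ k ≥ kbar,
      activeEstimate f eps (x k) = {i | xstar i = 0} ∧
      nonactiveEstimate f eps (x k) = {i | 0 < xstar i} :=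
  active_set_identification_along_sequence_general n f hf eps heps xstar hxstar lam mu hkkt hstrict
    x hconv
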